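/- Let K = ℓ²(ℕ) (indexed from n = 1) and H = K ⊕ K. Let T₁ be the diagonal operator on K with diagonals (1/n)_n and T₂ the diagonal operator with diagonals (1/((n+1)·log(n+1)))_n. Then the systems (H; K ⊕ 0, graph(T₁)) and (H; K ⊕ 0, graph(T₂)) are not boundedly isomorphic (even though T₁ and T₂ have the same Schatten invariant Sh(T₁) = Sh(T₂) = 1). -/

import Mathlib

/-!
A bounded isomorphism of `K × K` preserving `K ⊕ 0` is block upper triangular, and if it also
carries `graph T₁` onto `graph T₂`, reading off the graph condition for its inverse gives a
factorisation `T₁ = X T₂ A` with `X`, `A` bounded. Test it on a nonzero `x` supported on the first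
`n + 1` coordinates such that `A x` vanishes on the first `n` coordinates (a dimension count): then
`T₁` shrinks `x` by at most `1/(n+1)` while `T₂` shrinks `A x` by at least `1/((n+2) log (n+2))`,
so `log (n + 2) ≤ ‖X‖ ‖A‖` for every `n`, which is absurd.
-/

open scoped ENNReal lp

noncomputable section

abbrev K : Type := lp (fun _ : ℕ => ℂ) 2

/-- The graph of the diagonal operator with diagonals `a`, as a subspace of `K × K`. -/
def diagGraph (a : ℕ → ℂ) : Submodule ℂ (K × K) where
  carrier := {p | ∀ n, p.2 n = a n * p.1 n}
  add_mem' := by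
    intro p q hp hq n
    simp only [Prod.snd_add, Prod.fst_add, lp.coeFn_add, Pi.add_apply, hp n, hq n]
    ring
  zero_mem' := by
    intro n
    simp [lp.coeFn_zero]
  smul_mem' := by
    intro c p hp n
    simp only [Prod.smul_snd, Prod.smul_fst, lp.coeFn_smul, Pi.smul_apply, hp n, smul_eq_mul]
    ring

/-- The subspace K ⊕ 0 of K ⊕ K. -/
def firstSummand : Submodule ℂ (K × K) := (⊤ : Submodule ℂ K).prod (⊥ : Submodule ℂ K)

theorem memℓp_infty_of_antitone {E : Type*} [NormedAddCommGroup E] {a : ℕ → E}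
    (ha : Antitone fun n => ‖a n‖) : Memℓp a ∞ :=
  memℓp_infty ⟨‖a 0‖, Set.forall_mem_range.mpr fun n => ha n.zero_le⟩

namespace lp

section

variable {ι : Type*} {E F : ι → Type*} [∀ i, NormedAddCommGroup (E i)]
  [∀ i, NormedAddCommGroup (F i)] {p : ℝ≥0∞}

theorem norm_le_mul_norm_of_forall (hp : p ≠ 0) {x : lp E p} {y : lp F p} {C : ℝ} (hC : 0 ≤ C)
    (h : ∀ i, ‖x i‖ ≤ C * ‖y i‖) : ‖x‖ ≤ C * ‖y‖ := by
  calc ‖x‖ ≤ ‖C • toNorm y‖ := norm_mono hp fun i => by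
          simpa [coeFn_smul, abs_of_nonneg hC] using h i
    _ = C * ‖y‖ := by rw [norm_const_smul hp, norm_toNorm, Real.norm_of_nonneg hC]

end

section

variable {ι 𝕜 : Type*} [NormedField 𝕜] {p : ℝ≥0∞}

theorem norm_infty_apply_mul_le (a : ℓ^∞(ι, 𝕜)) (i : ι) (z : 𝕜) : ‖a i * z‖ ≤ ‖a‖ * ‖z‖ := by
  rw [norm_mul]
  gcongr
  exact norm_apply_le_norm ENNReal.top_ne_zero a i

theorem memℓp_infty_mul (a : ℓ^∞(ι, 𝕜)) (x : ℓ^p(ι, 𝕜)) : Memℓp (⇑a * ⇑x) p :=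
  ((lp.memℓp x).norm.const_mul ‖a‖).mono fun i => norm_infty_apply_mul_le a i (x i)

variable (p) [Fact (1 ≤ p)]

def diagonal (a : ℓ^∞(ι, 𝕜)) : ℓ^p(ι, 𝕜) →L[𝕜] ℓ^p(ι, 𝕜) :=
  LinearMap.mkContinuous
    { toFun x := ⟨⇑a * ⇑x, memℓp_infty_mul a x⟩
      map_add' x y := ext <| mul_add (a : ι → 𝕜) x y
      map_smul' c x := ext <| mul_left_comm (a : ι → 𝕜) (fun _ => c) x }
    ‖a‖ fun x => norm_le_mul_norm_of_forall (zero_lt_one.trans_le Fact.out).ne' (norm_nonneg a)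
      fun i => norm_infty_apply_mul_le a i (x i)

@[simp]
theorem diagonal_apply (a : ℓ^∞(ι, 𝕜)) (x : ℓ^p(ι, 𝕜)) (i : ι) : diagonal p a x i = a i * x i :=
  rfl

end

section

variable {𝕜 : Type*} [NormedField 𝕜] (p : ℝ≥0∞)

def ofFin (m : ℕ) : (Fin m → 𝕜) →ₗ[𝕜] ℓ^p(ℕ, 𝕜) where
  toFun c := ⟨fun k => if h : k < m then c ⟨k, h⟩ else 0,
    (memℓp_zero <| (Set.finite_lt_nat m).subset fun k hk => by
      by_contra h; exact hk (dif_neg h)).of_exponent_ge zero_le⟩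
  map_add' c d := by
    ext k
    rw [coeFn_add, Pi.add_apply]
    by_cases h : k < m <;> simp [h]
  map_smul' r c := ext <| funext fun k => by
    by_cases h : k < m <;> simp [h]

theorem ofFin_apply (m : ℕ) (c : Fin m → 𝕜) (k : ℕ) :
    ofFin p m c k = if h : k < m then c ⟨k, h⟩ else 0 :=
  rfl

theorem ofFin_injective (m : ℕ) : Function.Injective (ofFin (𝕜 := 𝕜) p m) := by
  intro c d h
  funext i
  simpa [ofFin_apply] using congr_arg (· (i : ℕ)) h

theorem exists_ne_zero_forall_lt_eq_zero (n : ℕ) (f : Fin n → ℓ^p(ℕ, 𝕜) →ₗ[𝕜] 𝕜) :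
    ∃ x : ℓ^p(ℕ, 𝕜), x ≠ 0 ∧ (∀ k, n < k → x k = 0) ∧ ∀ j, f j x = 0 := by
  have hker : LinearMap.ker (LinearMap.pi fun j => f j ∘ₗ ofFin p (n + 1)) ≠ ⊥ :=
    LinearMap.ker_ne_bot_of_finrank_lt (by simp)
  obtain ⟨c, hc, hc0⟩ := (Submodule.ne_bot_iff _).mp hker
  refine ⟨ofFin p (n + 1) c, ?_, fun k hk => dif_neg (by omega), fun j => congr_fun hc j⟩
  rwa [Ne, ← map_zero (ofFin p (n + 1)), (ofFin_injective p _).eq_iff]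

end

section

variable {𝕜 : Type*} [NontriviallyNormedField 𝕜] {p q : ℝ≥0∞} [Fact (1 ≤ p)] [Fact (1 ≤ q)]

theorem le_opNorm_mul_opNorm_mul_of_diagonal_eq_comp {s t : ℓ^∞(ℕ, 𝕜)}
    {A : ℓ^p(ℕ, 𝕜) →L[𝕜] ℓ^q(ℕ, 𝕜)} {X : ℓ^q(ℕ, 𝕜) →L[𝕜] ℓ^p(ℕ, 𝕜)}
    (h : ∀ x, diagonal p s x = X (diagonal q t (A x))) (n : ℕ) {σ τ : ℝ} (hσ : 0 < σ)
    (hs : ∀ k ≤ n, σ ≤ ‖s k‖) (ht : ∀ k, n ≤ k → ‖t k‖ ≤ τ) : σ ≤ ‖X‖ * ‖A‖ * τ := by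
  obtain ⟨x, hx0, hx, hAx⟩ :=
    exists_ne_zero_forall_lt_eq_zero p n fun j =>
      evalₗ _ q (j : ℕ) ∘ₗ (A : ℓ^p(ℕ, 𝕜) →ₗ[𝕜] ℓ^q(ℕ, 𝕜))
  have hτ : 0 ≤ τ := (norm_nonneg _).trans (ht n le_rfl)
  have hlower : ‖x‖ ≤ σ⁻¹ * ‖diagonal p s x‖ :=
    norm_le_mul_norm_of_forall (zero_lt_one.trans_le Fact.out).ne' (inv_nonneg.mpr hσ.le)
      fun k => by
        rcases le_or_gt k n with hk | hk
        · rw [diagonal_apply, norm_mul, le_inv_mul_iff₀ hσ]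
          exact mul_le_mul_of_nonneg_right (hs k hk) (norm_nonneg _)
        · simp [hx k hk]
  have hupper : ‖diagonal q t (A x)‖ ≤ τ * ‖A x‖ :=
    norm_le_mul_norm_of_forall (zero_lt_one.trans_le Fact.out).ne' hτ fun k => by
      rcases lt_or_ge k n with hk | hk
      · simp [show A x k = 0 from hAx ⟨k, hk⟩]
      · rw [diagonal_apply, norm_mul]
        gcongr
        exact ht k hk
  have hx_pos : 0 < ‖x‖ := norm_pos_iff.mpr hx0
  have key : σ * ‖x‖ ≤ (‖X‖ * ‖A‖ * τ) * ‖x‖ :=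
    calc σ * ‖x‖ ≤ ‖diagonal p s x‖ := (le_inv_mul_iff₀ hσ).mp hlower
      _ = ‖X (diagonal q t (A x))‖ := by rw [h]
      _ ≤ ‖X‖ * ‖diagonal q t (A x)‖ := X.le_opNorm _
      _ ≤ ‖X‖ * (τ * (‖A‖ * ‖x‖)) := by
        gcongr
        exact hupper.trans (by gcongr; exact A.le_opNorm x)
      _ = (‖X‖ * ‖A‖ * τ) * ‖x‖ := by ring
  exact le_of_mul_le_mul_right key hx_pos

end

end lp

section Systems

variable {R E F E' F' : Type*} [Ring R]
  [AddCommGroup E] [Module R E] [TopologicalSpace E]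
  [AddCommGroup F] [Module R F] [TopologicalSpace F] [IsTopologicalAddGroup F]
  [AddCommGroup E'] [Module R E'] [TopologicalSpace E']
  [AddCommGroup F'] [Module R F'] [TopologicalSpace F']

theorem exists_eq_comp_comp_of_image_graph (V : (E × F) ≃L[R] (E' × F')) (S : E →L[R] F)
    (T : E' →L[R] F')
    (hV : V '' ((⊤ : Submodule R E).prod (⊥ : Submodule R F) : Set (E × F)) ⊆
      ((⊤ : Submodule R E').prod (⊥ : Submodule R F') : Set (E' × F')))
    (hVgraph : ((T : E' →ₗ[R] F').graph : Set (E' × F')) ⊆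
      V '' ((S : E →ₗ[R] F).graph : Set (E × F))) :
    ∃ (A : E →L[R] E') (X : F' →L[R] F), ∀ x, S x = X (T (A x)) := by
  -- Writing `V⁻¹ (0, y) = (W₁₂ y, W₂₂ y)` and `y = T (A x)`, the point
  -- `V⁻¹ (A x, y) = (x + W₁₂ y, W₂₂ y)` lies on `graph S`, i.e. `W₂₂ y = S x + S (W₁₂ y)`.
  let W : (E' × F') →L[R] (E × F) := V.symm
  let A : E →L[R] E' := .fst R E' F' ∘L (V : (E × F) →L[R] (E' × F')) ∘L .inl R E F
  let X : F' →L[R] F := .snd R E F ∘L W ∘L .inr R E' F' - S ∘L .fst R E F ∘L W ∘L .inr R E' F'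
  refine ⟨A, X, fun x => ?_⟩
  have hVx : V (x, 0) = (A x, 0) := by
    have : V (x, 0) ∈ ((⊤ : Submodule R E').prod (⊥ : Submodule R F') : Set (E' × F')) :=
      hV ⟨(x, 0), ⟨trivial, rfl⟩, rfl⟩
    exact Prod.ext rfl this.2
  obtain ⟨q, hq, hVq⟩ := hVgraph ((T : E' →ₗ[R] F').mem_graph_iff (A x, T (A x)) |>.mpr rfl)
  have hq' : q = (x, 0) + W (0, T (A x)) := by
    rw [← V.symm_apply_apply q, hVq, ← V.symm_apply_apply (x, 0), hVx]
    simp [W, ← map_add]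
  rw [SetLike.mem_coe, LinearMap.mem_graph_iff, hq'] at hq
  simp only [Prod.snd_add, Prod.fst_add, zero_add, ContinuousLinearMap.coe_coe, map_add] at hq
  simp [X, hq]

end Systems

theorem log_natCast_add_two_pos (n : ℕ) : 0 < Real.log ((n : ℝ) + 2) :=
  Real.log_pos (by linarith [n.cast_nonneg (α := ℝ)])

theorem norm_one_div_natCast_add_one (n : ℕ) : ‖1 / ((n : ℂ) + 1)‖ = 1 / ((n : ℝ) + 1) := by
  rw [norm_div, norm_one]; norm_cast

theorem norm_one_div_natCast_mul_log (n : ℕ) :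
    ‖1 / ((((n : ℕ) + 2 : ℕ) : ℂ) * (Real.log ((n : ℝ) + 2) : ℂ))‖ =
      1 / (((n : ℝ) + 2) * Real.log ((n : ℝ) + 2)) := by
  rw [norm_div, norm_one, norm_mul, Complex.norm_natCast, Complex.norm_real,
    Real.norm_of_nonneg (log_natCast_add_two_pos n).le]
  push_cast; rfl

theorem antitone_one_div_add_one : Antitone fun n : ℕ => 1 / ((n : ℝ) + 1) :=
  fun m n h => one_div_le_one_div_of_le (by positivity) (by gcongr)

theorem antitone_one_div_mul_log :
    Antitone fun n : ℕ => 1 / (((n : ℝ) + 2) * Real.log ((n : ℝ) + 2)) := fun m n h => by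
  have := log_natCast_add_two_pos m
  exact one_div_le_one_div_of_le (by positivity) (by gcongr)

theorem exists_mul_one_div_mul_log_lt (M : ℝ) :
    ∃ n : ℕ, M * (1 / (((n : ℝ) + 2) * Real.log ((n : ℝ) + 2))) < 1 / ((n : ℝ) + 1) := by
  obtain ⟨n, hn⟩ := exists_nat_gt (Real.exp M)
  have hM : M < Real.log ((n : ℝ) + 2) :=
    (Real.lt_log_iff_exp_lt (by positivity)).mpr (by linarith)
  have := log_natCast_add_two_pos n
  refine ⟨n, ?_⟩
  calc M * (1 / (((n : ℝ) + 2) * Real.log ((n : ℝ) + 2)))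
      < Real.log ((n : ℝ) + 2) * (1 / (((n : ℝ) + 2) * Real.log ((n : ℝ) + 2))) := by gcongr
    _ = 1 / ((n : ℝ) + 2) := by field_simp
    _ < 1 / ((n : ℝ) + 1) := by gcongr; linarith

theorem diagGraph_eq_graph_diagonal (a : ℓ^∞(ℕ, ℂ)) :
    diagGraph a = (lp.diagonal 2 a : K →ₗ[ℂ] K).graph := by
  ext ⟨x, y⟩
  change (∀ n, y n = a n * x n) ↔ y = lp.diagonal 2 a x
  exact ⟨fun h => lp.ext (funext h), fun h n => by rw [h, lp.diagonal_apply]⟩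

theorem not_boundedly_isomorphic_inv_n_and_inv_nlogn :
    ¬ ∃ V : (K × K) ≃L[ℂ] (K × K),
        V '' (firstSummand : Set (K × K)) = (firstSummand : Set (K × K)) ∧
        V '' ((diagGraph fun n : ℕ => 1 / ((n : ℂ) + 1)) : Set (K × K)) =
          ((diagGraph fun n : ℕ =>
              1 / ((((n : ℕ) + 2 : ℕ) : ℂ) * (Real.log ((n : ℝ) + 2) : ℂ))) : Set (K × K)) := by
  rintro ⟨V, hE, hG⟩
  have hs : Antitone fun n : ℕ => ‖1 / ((n : ℂ) + 1)‖ := by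
    simpa only [norm_one_div_natCast_add_one] using antitone_one_div_add_one
  have ht : Antitone fun n : ℕ =>
      ‖1 / ((((n : ℕ) + 2 : ℕ) : ℂ) * (Real.log ((n : ℝ) + 2) : ℂ))‖ := by
    simpa only [norm_one_div_natCast_mul_log] using antitone_one_div_mul_log
  let s : ℓ^∞(ℕ, ℂ) := ⟨_, memℓp_infty_of_antitone hs⟩
  let t : ℓ^∞(ℕ, ℂ) := ⟨_, memℓp_infty_of_antitone ht⟩
  obtain ⟨A, X, hfac⟩ :=
    exists_eq_comp_comp_of_image_graph V (lp.diagonal 2 s) (lp.diagonal 2 t) hE.subset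
      (by rw [← diagGraph_eq_graph_diagonal, ← diagGraph_eq_graph_diagonal]; exact hG.superset)
  obtain ⟨n, hn⟩ := exists_mul_one_div_mul_log_lt (‖X‖ * ‖A‖)
  have hsn : 0 < ‖s n‖ := by
    rw [show ‖s n‖ = 1 / ((n : ℝ) + 1) from norm_one_div_natCast_add_one n]
    positivity
  have key : ‖s n‖ ≤ ‖X‖ * ‖A‖ * ‖t n‖ :=
    lp.le_opNorm_mul_opNorm_mul_of_diagonal_eq_comp hfac n hsn (fun k hk => hs hk)
      (fun k hk => ht hk)
  rw [show ‖s n‖ = _ from norm_one_div_natCast_add_one n,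
    show ‖t n‖ = _ from norm_one_div_natCast_mul_log n] at key
  exact hn.not_ge key

end
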